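/- Let ρ₀ be an irrational number of type 1. Then for every δ > 0, sup_{z∈ℝ} |∑_{ν=1}^N ψ(z − ρ₀ν)| = O(N^δ) as N → ∞. -/

import Mathlib

open Filter

/-- `⟨x⟩`, the distance from `x` to the nearest integer:
`⟨x⟩ = min {x − ⌊x⌋, 1 − (x − ⌊x⌋)}`. -/
noncomputable def distNearestInt (x : ℝ) : ℝ := min (x - ⌊x⌋) (1 - (x - ⌊x⌋))

/-- The set of exponents `ζ ≥ 0` with `liminf_{p → ∞} p^ζ ⟨pρ⟩ = 0` (`p` a positive
integer); the liminf condition is expressed in its `ε`–`frequently` form. -/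
def typeSet (ρ : ℝ) : Set ℝ :=
  {ζ : ℝ | 0 ≤ ζ ∧ ∀ ε > 0, ∃ᶠ p : ℕ in atTop, (p : ℝ) ^ ζ * distNearestInt (p * ρ) < ε}

/-- An irrational number `ρ` is of type `η` if `η` is the supremum of `typeSet ρ`. -/
def IsOfType (ρ η : ℝ) : Prop := IsLUB (typeSet ρ) η

/-- `ψ(x) = ⌊x⌋ − x + 1/2`. -/
noncomputable def psi (x : ℝ) : ℝ := ⌊x⌋ - x + 1 / 2

/-!
Write `ϑ = -ρ₀`. For each `N`, Dirichlet gives a reduced fraction `a / q` with `q ≤ N` and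
`|q ϑ - a| ≤ 1 / (N + 1)`. On a block of `q` consecutive `ν` the points `w + ν ϑ` lie within
`1 / q` of the grid points `w + ν a / q`, which run over all residues mod `q`; by Hermite's
identity `ψ` sums to `ψ (q w)` over the grid, and moving the points costs at most `1` plus two
unit jumps of the floor, so every block contributes at most `4`. As `ρ₀` has type `1`,
`q ^ (1 + δ) ⟨q ρ₀⟩ ≫ 1`, whence `N / q ≪ N ^ δ` blocks. The remainder has length
`r < q ≤ N - r`, so `r ≤ N / 2`, and induction on `N` closes with the geometric factor `2 ^ (-δ)`.
-/

open Finset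

theorem Int.sum_range_add_ediv {q : ℕ} (hq : 0 < q) (m : ℤ) :
    ∑ k ∈ Finset.range q, (m + k) / (q : ℤ) = m := by
  have hq' : (q : ℤ) ≠ 0 := by exact_mod_cast hq.ne'
  have step : ∀ m : ℤ, ∑ k ∈ Finset.range q, (m + 1 + k) / (q : ℤ) =
      ∑ k ∈ Finset.range q, (m + k) / (q : ℤ) + 1 := by
    intro m
    have h := sum_range_succ (fun k : ℕ => (m + k) / (q : ℤ)) q
    rw [sum_range_succ', Int.add_ediv_of_dvd_right dvd_rfl, Int.ediv_self hq'] at h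
    simp only [Nat.cast_add, Nat.cast_one, Nat.cast_zero, add_zero] at h
    simp only [add_assoc, add_comm (1 : ℤ)]
    linarith
  induction m using Int.induction_on with
  | zero =>
    refine sum_eq_zero fun k hk => Int.ediv_eq_zero_of_lt (by omega) ?_
    simpa using mem_range.mp hk
  | succ n ih => rw [step, ih]
  | pred n ih => have := step (-n - 1); simp only [sub_add_cancel, ih] at this; linarith

theorem Int.sum_range_floor_add_div {K : Type*} [Field K] [LinearOrder K] [IsStrictOrderedRing K]
    [FloorRing K] (x : K) {q : ℕ} (hq : 0 < q) :
    ∑ k ∈ Finset.range q, ⌊x + k / q⌋ = ⌊q * x⌋ := by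
  have hq' : (q : K) ≠ 0 := by positivity
  calc ∑ k ∈ Finset.range q, ⌊x + k / q⌋ = ∑ k ∈ Finset.range q, (⌊q * x⌋ + k) / (q : ℤ) := by
        refine sum_congr rfl fun k _ => ?_
        rw [show x + k / q = (q * x + k) / q by field_simp, Int.floor_div_natCast,
          Int.floor_add_natCast]
    _ = ⌊q * x⌋ := Int.sum_range_add_ediv hq _

theorem abs_psi_le_half (x : ℝ) : |psi x| ≤ 1 / 2 := by
  unfold psi
  have := Int.sub_one_lt_floor x
  have := Int.floor_le x
  rw [abs_le]; constructor <;> linarith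

theorem psi_add_intCast (x : ℝ) (m : ℤ) : psi (x + m) = psi x := by
  simp only [psi, Int.floor_add_intCast, Int.cast_add]; ring

theorem sum_range_psi_add_div (x : ℝ) {q : ℕ} (hq : 0 < q) :
    ∑ k ∈ range q, psi (x + k / q) = psi (q * x) := by
  have hmean : ∑ k ∈ range q, (k / q : ℝ) = (q - 1) / 2 := by
    have h := congrArg (Nat.cast : ℕ → ℝ) (sum_range_id_mul_two q)
    push_cast [Nat.cast_sub hq] at h
    rw [← sum_div]
    field_simp
    linarith
  simp only [psi, sum_add_distrib, sum_sub_distrib, ← Int.cast_sum,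
    Int.sum_range_floor_add_div x hq, hmean, sum_const, card_range, nsmul_eq_mul]
  ring

theorem injOn_mul_emod {q : ℕ} {a : ℤ} (ha : IsCoprime a q) :
    Set.InjOn (fun ν : ℕ => ν * a % (q : ℤ)) (range q) := by
  intro ν hν ν' hν' h
  have hdvd : (q : ℤ) ∣ (ν' - ν) * a := by
    rw [sub_mul]; exact Int.ModEq.dvd h
  have := Int.eq_zero_of_abs_lt_dvd (ha.symm.dvd_of_dvd_mul_right hdvd)
    (by simp only [coe_range, Set.mem_Iio] at hν hν'; rw [abs_lt]; omega)
  omega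

theorem sum_range_comp_mul_emod {M : Type*} [AddCommMonoid M] (f : ℤ → M) {q : ℕ} {a : ℤ}
    (ha : IsCoprime a q) : ∑ ν ∈ range q, f (ν * a % q) = ∑ j ∈ range q, f j := by
  have hmem : ∀ ν ∈ range q, (ν * a % q).toNat ∈ range q := by
    intro ν hν
    rw [mem_range] at hν ⊢
    have := Int.emod_lt_of_pos (ν * a) (by omega : (0 : ℤ) < q)
    omega
  have hcast : ∀ ν ∈ range q, ((ν * a % q).toNat : ℤ) = ν * a % q := fun ν hν =>
    Int.toNat_of_nonneg (Int.emod_nonneg _ (by rw [mem_range] at hν; omega))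
  have hinj : Set.InjOn (fun ν : ℕ => (ν * a % q).toNat) (range q) := fun ν hν ν' hν' h =>
    injOn_mul_emod ha hν hν' (by
      simp only at h ⊢; rw [← hcast ν hν, ← hcast ν' hν', h])
  exact sum_nbij _ hmem hinj (surjOn_of_injOn_of_card_le _ hmem hinj le_rfl)
    fun ν hν => by rw [hcast ν hν]

theorem sum_range_psi_add_mul_div (w : ℝ) {q : ℕ} {a : ℤ} (hq : 0 < q) (ha : IsCoprime a q) :
    ∑ ν ∈ range q, psi (w + ν * a / q) = psi (q * w) := by
  have hreduce : ∀ ν : ℕ, psi (w + ν * a / q) = psi (w + ((ν * a % q : ℤ) : ℝ) / q) := by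
    intro ν
    have hdiv : (ν : ℝ) * a = ((ν * a % q : ℤ) : ℝ) + q * ((ν * a / q : ℤ) : ℝ) := by
      exact_mod_cast (Int.emod_add_mul_ediv (ν * a) q).symm
    rw [← psi_add_intCast (w + ((ν * a % q : ℤ) : ℝ) / q) (ν * a / q), hdiv]
    congr 1
    field_simp
    ring
  simp only [hreduce, sum_range_comp_mul_emod (fun j : ℤ => psi (w + (j : ℝ) / q)) ha,
    Int.cast_natCast, sum_range_psi_add_div w hq]

theorem exists_abs_sub_intCast_le_of_floor_add_ne {x e : ℝ} (h : ⌊x + e⌋ ≠ ⌊x⌋) :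
    ∃ m : ℤ, |x - m| ≤ |e| := by
  have := neg_abs_le e
  have := le_abs_self e
  rcases h.lt_or_gt with hlt | hgt
  · have : (⌊x + e⌋ : ℝ) + 1 ≤ ⌊x⌋ := by exact_mod_cast hlt
    have := Int.lt_floor_add_one (x + e)
    have := Int.floor_le x
    exact ⟨⌊x⌋, abs_le.2 ⟨by linarith, by linarith⟩⟩
  · have : (⌊x⌋ : ℝ) + 1 ≤ ⌊x + e⌋ := by exact_mod_cast hgt
    have := Int.lt_floor_add_one x
    have := Int.floor_le (x + e)
    exact ⟨⌊x + e⌋, abs_le.2 ⟨by linarith, by linarith⟩⟩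

theorem card_le_two_of_forall_abs_add_lt_one (t : ℝ) (s : Finset ℤ)
    (h : ∀ n ∈ s, |t + n| < 1) : #s ≤ 2 := by
  have hsub : s ⊆ Icc ⌊-t⌋ (⌊-t⌋ + 1) := by
    intro n hn
    obtain ⟨h₁, h₂⟩ := abs_lt.1 (h n hn)
    have := Int.floor_le (-t)
    have := Int.lt_floor_add_one (-t)
    have : ⌊-t⌋ - 1 < n := by exact_mod_cast (show (⌊-t⌋ : ℝ) - 1 < n by linarith)
    have : n < ⌊-t⌋ + 2 := by exact_mod_cast (show (n : ℝ) < ⌊-t⌋ + 2 by linarith)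
    rw [mem_Icc]; omega
  have := card_le_card hsub
  rw [Int.card_Icc] at this
  omega

open scoped Classical in
theorem card_filter_exists_abs_sub_intCast_lt_le_two (w : ℝ) {q : ℕ} {a : ℤ}
    (ha : IsCoprime a q) :
    #{ν ∈ range q | ∃ m : ℤ, |w + (ν : ℕ) * a / q - m| < 1 / q} ≤ 2 := by
  set J := {ν ∈ range q | ∃ m : ℤ, |w + (ν : ℕ) * a / q - m| < 1 / q}
  choose! m hm using fun ν (hν : ν ∈ J) => (mem_filter.1 hν).2
  -- the integers `n ν` are pairwise incongruent mod `q`, and `q * w + n ν` lies in `(-1, 1)`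
  set n : ℕ → ℤ := fun ν => ν * a - q * m ν
  have hnmod : ∀ ν, n ν % q = ν * a % q := fun ν => Int.sub_mul_emod_self_left _ _ _
  have hinj : Set.InjOn n J := fun ν hν ν' hν' h =>
    injOn_mul_emod ha (mem_filter.1 hν).1 (mem_filter.1 hν').1
      (by simp only [← hnmod, h])
  have hnear : ∀ k ∈ J.image n, |q * w + k| < 1 := by
    simp only [mem_image]
    rintro _ ⟨ν, hν, rfl⟩
    have hq : (0 : ℝ) < q := by
      have := (mem_filter.1 hν).1; rw [mem_range] at this; exact_mod_cast (by omega : 0 < q)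
    calc |q * w + ((ν * a - q * m ν : ℤ) : ℝ)| = |q * (w + ν * a / q - m ν)| := by
          push_cast; congr 1; field_simp; ring
      _ = q * |w + ν * a / q - m ν| := by rw [abs_mul, abs_of_pos hq]
      _ < q * (1 / q) := by gcongr; exact hm ν hν
      _ = 1 := by field_simp
  rw [← card_image_of_injOn hinj]
  exact card_le_two_of_forall_abs_add_lt_one _ _ hnear

theorem abs_psi_add_sub_psi_le {x e : ℝ} (he : |e| < 1) :
    |psi (x + e) - psi x| ≤ |e| + if ⌊x + e⌋ = ⌊x⌋ then 0 else 1 := by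
  have hdiff : psi (x + e) - psi x = (⌊x + e⌋ - ⌊x⌋ : ℤ) - e := by simp only [psi]; push_cast; ring
  rw [hdiff]
  split_ifs with h
  · simp [h]
  · have hjump : |⌊x + e⌋ - ⌊x⌋| ≤ 1 := by
      obtain ⟨h₁, h₂⟩ := abs_lt.1 he
      have : ⌊x + e⌋ ≤ ⌊x⌋ + 1 :=
        Int.floor_le_iff.2 (by push_cast; linarith [Int.lt_floor_add_one x])
      have : ⌊x⌋ - 1 ≤ ⌊x + e⌋ := Int.le_floor.2 (by push_cast; linarith [Int.floor_le x])
      rw [abs_le]; omega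
    have : |((⌊x + e⌋ - ⌊x⌋ : ℤ) : ℝ)| ≤ 1 := by exact_mod_cast hjump
    linarith [abs_sub ((⌊x + e⌋ - ⌊x⌋ : ℤ) : ℝ) e]

open scoped Classical in
theorem abs_sum_psi_add_sub_sum_psi_le {ι : Type*} (s : Finset ι) (y e : ι → ℝ)
    (he : ∀ i ∈ s, |e i| < 1) :
    |∑ i ∈ s, psi (y i + e i) - ∑ i ∈ s, psi (y i)|
      ≤ ∑ i ∈ s, |e i| + #{i ∈ s | ⌊y i + e i⌋ ≠ ⌊y i⌋} := by
  rw [← sum_sub_distrib]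
  refine (abs_sum_le_sum_abs _ _).trans ?_
  calc ∑ i ∈ s, |psi (y i + e i) - psi (y i)|
      ≤ ∑ i ∈ s, (|e i| + if ⌊y i + e i⌋ ≠ ⌊y i⌋ then 1 else 0) :=
        sum_le_sum fun i hi => by
          simpa only [ite_not] using abs_psi_add_sub_psi_le (he i hi)
    _ = _ := by rw [sum_add_distrib, sum_boole]

theorem abs_sum_range_psi_le_four (w ϑ : ℝ) {q : ℕ} {a : ℤ} (ha : IsCoprime a q)
    (hϑ : |q * ϑ - a| < 1 / q) : |∑ ν ∈ range q, psi (w + ν * ϑ)| ≤ 4 := by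
  classical
  have hq : 0 < q := by
    by_contra! h
    obtain rfl : q = 0 := by omega
    simp only [CharP.cast_eq_zero, div_zero, zero_mul, zero_sub, abs_neg] at hϑ
    exact (abs_nonneg _).not_gt hϑ
  have hqR : (0 : ℝ) < q := by exact_mod_cast hq
  set y : ℕ → ℝ := fun ν => w + ν * a / q
  set e : ℕ → ℝ := fun ν => ν * (q * ϑ - a) / q
  have hsplit : ∀ ν : ℕ, w + ν * ϑ = y ν + e ν := fun ν => by simp only [y, e]; field_simp; ring
  have he : ∀ ν ∈ range q, |e ν| ≤ |q * ϑ - a| := by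
    intro ν hν
    have : (ν : ℝ) ≤ q := by exact_mod_cast (mem_range.1 hν).le
    simp only [e, abs_div, abs_mul, Nat.abs_cast]
    rw [div_le_iff₀ hqR]
    nlinarith [abs_nonneg (q * ϑ - a)]
  have he_lt : ∀ ν ∈ range q, |e ν| < 1 / q := fun ν hν => (he ν hν).trans_lt hϑ
  have he_sum : ∑ ν ∈ range q, |e ν| ≤ 1 := by
    calc ∑ ν ∈ range q, |e ν| ≤ ∑ _ν ∈ range q, |q * ϑ - a| := sum_le_sum he
      _ = q * |q * ϑ - a| := by simp
      _ ≤ q * (1 / q) := by gcongr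
      _ = 1 := by field_simp
  have hjumps : #{ν ∈ range q | ⌊y ν + e ν⌋ ≠ ⌊y ν⌋} ≤ 2 := by
    refine (card_le_card fun ν hν => ?_).trans (card_filter_exists_abs_sub_intCast_lt_le_two w ha)
    obtain ⟨hν, hjump⟩ := mem_filter.1 hν
    obtain ⟨m, hm⟩ := exists_abs_sub_intCast_le_of_floor_add_ne hjump
    exact mem_filter.2 ⟨hν, m, hm.trans_lt (he_lt ν hν)⟩
  have hperturb := abs_sum_psi_add_sub_sum_psi_le (range q) y e
    fun ν hν => (he_lt ν hν).trans_le (by rw [div_le_one hqR]; exact_mod_cast hq)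
  rw [sum_range_psi_add_mul_div w hq ha] at hperturb
  have hjumpsR : (#{ν ∈ range q | ⌊y ν + e ν⌋ ≠ ⌊y ν⌋} : ℝ) ≤ 2 := by exact_mod_cast hjumps
  simp only [hsplit]
  linarith [abs_sub_abs_le_abs_sub (∑ ν ∈ range q, psi (y ν + e ν)) (psi (q * w)),
    abs_psi_le_half (q * w)]

theorem sum_range_add_comp_add_mul {M : Type*} [AddCommMonoid M] (f : ℝ → M) (w ϑ : ℝ)
    (k n : ℕ) : ∑ ν ∈ range (k + n), f (w + ν * ϑ)
      = ∑ ν ∈ range k, f (w + ν * ϑ) + ∑ ν ∈ range n, f ((w + k * ϑ) + ν * ϑ) := by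
  rw [sum_range_add]
  congr 1
  refine sum_congr rfl fun ν _ => ?_
  push_cast; ring_nf

theorem abs_sum_range_mul_le {f : ℝ → ℝ} {ϑ B : ℝ} {q : ℕ}
    (hblock : ∀ w, |∑ ν ∈ range q, f (w + ν * ϑ)| ≤ B) (m : ℕ) (w : ℝ) :
    |∑ ν ∈ range (m * q), f (w + ν * ϑ)| ≤ m * B := by
  induction m with
  | zero => simp
  | succ m ih =>
    rw [add_mul, one_mul, sum_range_add_comp_add_mul]
    calc _ ≤ _ := abs_add_le _ _
      _ ≤ m * B + B := add_le_add ih (hblock _)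
      _ = _ := by push_cast; ring

theorem abs_sum_range_le_rpow_of_forall_exists_block {f : ℝ → ℝ} {ϑ B c δ : ℝ} (hc : 0 < c)
    (hδ : 0 < δ)
    (hblock : ∀ N : ℕ, 0 < N → ∃ q : ℕ, 0 < q ∧ q ≤ N ∧ c * N ≤ q * (N : ℝ) ^ δ ∧
      ∀ w, |∑ ν ∈ range q, f (w + ν * ϑ)| ≤ B) (N : ℕ) (w : ℝ) :
    |∑ ν ∈ range N, f (w + ν * ϑ)| ≤ B / (c * (1 - 2 ^ (-δ))) * (N : ℝ) ^ δ := by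
  set κ : ℝ := 2 ^ (-δ)
  have hκ : κ < 1 := Real.rpow_lt_one_of_one_lt_of_neg one_lt_two (neg_lt_zero.2 hδ)
  set A := B / (c * (1 - κ))
  have hA : B / c = A * (1 - κ) := by simp only [A]; field_simp [(sub_pos.2 hκ).ne']
  induction N using Nat.strong_induction_on generalizing w with
  | _ N ih =>
  rcases Nat.eq_zero_or_pos N with rfl | hN
  · simp [Real.zero_rpow hδ.ne']
  obtain ⟨q, hq, hqN, hcN, hB⟩ := hblock N hN
  set m := N / q
  set r := N % q
  have hNmr : m * q + r = N := Nat.div_add_mod' N q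
  have hm : 1 ≤ m := (Nat.one_le_div_iff hq).2 hqN
  have hr : r < q := Nat.mod_lt N hq
  have hrN : 2 * r ≤ N := by nlinarith
  have hcm : c * m ≤ (N : ℝ) ^ δ := by
    have : (m : ℝ) * q ≤ N := by exact_mod_cast hNmr ▸ Nat.le_add_right _ _
    have hqR : (0 : ℝ) < q := by exact_mod_cast hq
    nlinarith
  have hrδ : (r : ℝ) ^ δ ≤ κ * (N : ℝ) ^ δ := by
    have : (r : ℝ) ≤ N / 2 := by rw [le_div_iff₀ two_pos]; exact_mod_cast (by omega : r * 2 ≤ N)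
    calc (r : ℝ) ^ δ ≤ ((N : ℝ) / 2) ^ δ := by gcongr
      _ = κ * (N : ℝ) ^ δ := by
        simp only [κ]
        rw [Real.div_rpow (by positivity) zero_le_two, Real.rpow_neg zero_le_two]; ring
  have hblocks := abs_sum_range_mul_le hB m w
  have htail := ih r (by omega) (w + ↑(m * q) * ϑ)
  have hB0 : 0 ≤ B := (abs_nonneg _).trans (hB 0)
  have hmB : m * B ≤ A * (1 - κ) * (N : ℝ) ^ δ := by
    rw [← hA, div_mul_eq_mul_div, le_div_iff₀ hc]; nlinarith
  have hA0 : 0 ≤ A := by positivity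
  have hsplit := sum_range_add_comp_add_mul f w ϑ (m * q) r
  rw [hNmr] at hsplit
  calc |∑ ν ∈ range N, f (w + ν * ϑ)| ≤ m * B + A * (r : ℝ) ^ δ :=
        hsplit ▸ (abs_add_le _ _).trans (add_le_add hblocks htail)
    _ ≤ A * (1 - κ) * (N : ℝ) ^ δ + A * (κ * (N : ℝ) ^ δ) := by gcongr
    _ = A * (N : ℝ) ^ δ := by ring

theorem exists_block_abs_sum_range_psi_le_four {ϑ c δ : ℝ} (hc : 0 ≤ c) (hδ : 0 ≤ δ)
    (hϑ : ∀ q : ℕ, 0 < q → ∀ a : ℤ, c ≤ (q : ℝ) ^ (1 + δ) * |q * ϑ - a|) {N : ℕ} (hN : 0 < N) :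
    ∃ q : ℕ, 0 < q ∧ q ≤ N ∧ c * N ≤ q * (N : ℝ) ^ δ ∧
      ∀ w, |∑ ν ∈ range q, psi (w + ν * ϑ)| ≤ 4 := by
  obtain ⟨x, hx, hxN⟩ := Real.exists_rat_abs_sub_le_and_den_le ϑ hN
  have hq : (0 : ℝ) < x.den := by exact_mod_cast x.pos
  have hqN : (x.den : ℝ) ≤ N := by exact_mod_cast hxN
  have happrox : |x.den * ϑ - x.num| ≤ 1 / (N + 1) := by
    have : (x.den : ℝ) * ϑ - x.num = x.den * (ϑ - x) := by
      rw [Rat.cast_def]; field_simp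
    rw [this, abs_mul, Nat.abs_cast]
    calc (x.den : ℝ) * |ϑ - x| ≤ x.den * (1 / ((N + 1) * x.den)) := by gcongr
      _ = 1 / (N + 1) := by field_simp
  refine ⟨x.den, x.pos, hxN, ?_, fun w => abs_sum_range_psi_le_four w ϑ
    (Int.isCoprime_iff_gcd_eq_one.2 x.reduced) (happrox.trans_lt ?_)⟩
  · have h := (hϑ x.den x.pos x.num).trans
      (mul_le_mul_of_nonneg_left happrox (by positivity))
    rw [mul_one_div, le_div_iff₀ (by positivity), Real.rpow_add hq, Real.rpow_one] at h
    have : (x.den : ℝ) ^ δ ≤ (N : ℝ) ^ δ := by gcongr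
    nlinarith
  · exact one_div_lt_one_div_of_lt hq (by linarith)

theorem distNearestInt_le_abs_sub_intCast (x : ℝ) (m : ℤ) : distNearestInt x ≤ |x - m| := by
  rcases le_or_gt m ⌊x⌋ with h | h
  · have : (m : ℝ) ≤ ⌊x⌋ := by exact_mod_cast h
    exact (min_le_left _ _).trans (by linarith [le_abs_self (x - m)])
  · have : (⌊x⌋ : ℝ) + 1 ≤ m := by exact_mod_cast h
    exact (min_le_right _ _).trans (by linarith [neg_abs_le (x - m)])

theorem Irrational.distNearestInt_pos {x : ℝ} (hx : Irrational x) : 0 < distNearestInt x := by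
  have := (Int.floor_le x).lt_of_ne (hx.ne_int ⌊x⌋).symm
  have := Int.lt_floor_add_one x
  exact lt_min (by linarith) (by linarith)

theorem exists_forall_le_rpow_mul_abs_sub_of_notMem_typeSet {ρ η : ℝ} (hρ : Irrational ρ)
    (hη : 0 ≤ η) (hηρ : η ∉ typeSet ρ) :
    ∃ c > 0, ∀ q : ℕ, 0 < q → ∀ a : ℤ, c ≤ (q : ℝ) ^ η * |q * ρ - a| := by
  set g : ℕ → ℝ := fun p => (p : ℝ) ^ η * distNearestInt (p * ρ)
  have hg : ∀ p : ℕ, 0 < p → 0 < g p := fun p hp =>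
    mul_pos (by positivity) (hρ.natCast_mul hp.ne').distNearestInt_pos
  simp only [typeSet, Set.mem_ofPred_eq, not_and, not_forall, not_frequently, not_lt] at hηρ
  obtain ⟨ε, hε, hev⟩ := hηρ hη
  obtain ⟨P, hP⟩ := eventually_atTop.1 hev
  obtain ⟨p₀, hp₀, hmin⟩ := (Icc 1 (P + 1)).exists_min_image g ⟨1, by simp⟩
  refine ⟨min ε (g p₀), lt_min hε (hg p₀ (mem_Icc.1 hp₀).1), fun q hq a => ?_⟩
  have hgq : min ε (g p₀) ≤ g q := by
    rcases le_or_gt P q with h | h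
    · exact (min_le_left _ _).trans (hP q h)
    · exact (min_le_right _ _).trans (hmin q (mem_Icc.2 ⟨hq, by omega⟩))
  exact hgq.trans
    (mul_le_mul_of_nonneg_left (distNearestInt_le_abs_sub_intCast _ a) (by positivity))

theorem sum_Icc_one_eq_sum_range {M : Type*} [AddCommMonoid M] (f : ℕ → M) (N : ℕ) :
    ∑ ν ∈ Icc 1 N, f ν = ∑ ν ∈ range N, f (ν + 1) := by
  rw [range_eq_Ico, sum_Ico_add' f 0 N 1]; rfl

open Asymptotics in
/-- Bound (2.22): if `ρ₀` is an irrational number of type `1`, then for every `δ > 0`,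
`sup_z |∑_{ν=1}^N ψ(z − ρ₀ν)| = O(N^δ)` as `N → ∞`. -/
theorem psi_sum_isBigO_of_type_one (ρ₀ : ℝ)
    (hirr : Irrational ρ₀) (htype : IsOfType ρ₀ 1) :
    ∀ δ > (0 : ℝ),
      (fun N : ℕ => ⨆ z : ℝ, |∑ ν ∈ Finset.Icc 1 N, psi (z - ρ₀ * ν)|)
        =O[atTop] (fun N : ℕ => (N : ℝ) ^ δ) := by
  intro δ hδ
  obtain ⟨c, hc, hcρ⟩ := exists_forall_le_rpow_mul_abs_sub_of_notMem_typeSet hirr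
    (η := 1 + δ) (by positivity) fun h => (htype.1 h).not_gt (by linarith)
  have hϑ : ∀ q : ℕ, 0 < q → ∀ a : ℤ, c ≤ (q : ℝ) ^ (1 + δ) * |q * -ρ₀ - a| := by
    intro q hq a
    have := hcρ q hq (-a)
    rwa [show (q : ℝ) * ρ₀ - ((-a : ℤ) : ℝ) = -(q * -ρ₀ - a) by push_cast; ring, abs_neg] at this
  have hbound := abs_sum_range_le_rpow_of_forall_exists_block hc hδ
    fun N hN => exists_block_abs_sum_range_psi_le_four hc.le hδ.le hϑ hN
  refine IsBigO.of_bound (4 / (c * (1 - 2 ^ (-δ)))) (Eventually.of_forall fun N => ?_)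
  rw [Real.norm_of_nonneg (Real.iSup_nonneg fun _ => abs_nonneg _),
    Real.norm_of_nonneg (by positivity)]
  refine Real.iSup_le (fun z => ?_) ((abs_nonneg _).trans (hbound N 0))
  convert hbound N (z - ρ₀) using 2
  rw [sum_Icc_one_eq_sum_range]
  refine sum_congr rfl fun ν _ => ?_
  push_cast; ring_nf
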